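/- Let $a < b$ be real numbers, $N$ a positive natural number, $\Delta x = (b-a)/N$, $x_k = a + k\,\Delta x$, and let $f : \mathbb{R} \to \mathbb{R}$ be twice continuously differentiable on $[a,b]$ with $|f''(x)| \le M$ for all $x \in [a,b]$. Then the composite trapezoidal sum $T_N = \sum_{k=1}^N \frac{f(x_{k-1})+f(x_k)}{2}\,\Delta x$ satisfies the error bound $\Big| \int_a^b f(x)\,dx - T_N \Big| \le \frac{M (b-a)^3}{12 N^2}$. -/

import Mathlib

open MeasureTheory Set Finset intervalIntegral

/-!
On a cell `[c, d]`, the function `(t - (c + d) / 2) f t - (t - c) (t - d) / 2 f' t` has derivative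
`f t - (t - c) (t - d) / 2 f'' t`, so the fundamental theorem of calculus gives the Peano kernel
form of the trapezoid error, `∫ f - (f c + f d) / 2 (d - c) = ∫ (t - c) (t - d) / 2 f'' t`.
Since `∫ (t - c) (d - t) = (d - c)³ / 6`, the error on the cell is at most `M (d - c)³ / 12`;
summing over `N` cells of width `(b - a) / N` gives `M (b - a)³ / (12 N²)`.
-/

theorem ContDiffOn.hasDerivAt_iteratedDerivWithin_Icc {f : ℝ → ℝ} {a b t : ℝ}
    {n : WithTop ℕ∞} {m : ℕ} (hf : ContDiffOn ℝ n f (Icc a b)) (hmn : m < n)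
    (ht : t ∈ Ioo a b) :
    HasDerivAt (iteratedDerivWithin m f (Icc a b))
      (iteratedDerivWithin (m + 1) f (Icc a b) t) t := by
  rw [iteratedDerivWithin_succ]
  exact ((hf.differentiableOn_iteratedDerivWithin hmn (uniqueDiffOn_Icc (ht.1.trans ht.2)))
    t (Ioo_subset_Icc_self ht)).hasDerivWithinAt.hasDerivAt (Icc_mem_nhds ht.1 ht.2)

theorem integral_sub_trapezoid_eq_integral_mul_deriv2 {f f' f'' : ℝ → ℝ} {c d : ℝ}
    (hcd : c ≤ d)
    (hf : ContinuousOn f (Icc c d)) (hf' : ContinuousOn f' (Icc c d))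
    (hf'' : ContinuousOn f'' (Icc c d))
    (hderiv : ∀ t ∈ Ioo c d, HasDerivAt f (f' t) t)
    (hderiv' : ∀ t ∈ Ioo c d, HasDerivAt f' (f'' t) t) :
    (∫ t in c..d, f t) - (f c + f d) / 2 * (d - c) =
      ∫ t in c..d, (t - c) * (t - d) / 2 * f'' t := by
  have hK : ContinuousOn (fun t => (t - c) * (t - d) / 2 * f'' t) (Icc c d) := by fun_prop
  have hFTC := integral_eq_sub_of_hasDerivAt_of_le hcd
    (f := fun t => (t - (c + d) / 2) * f t - (t - c) * (t - d) / 2 * f' t)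
    (f' := fun t => f t - (t - c) * (t - d) / 2 * f'' t) (by fun_prop)
    (fun t ht => ((((hasDerivAt_id t).sub_const _).mul (hderiv t ht)).sub
      (((((hasDerivAt_id t).sub_const c).mul ((hasDerivAt_id t).sub_const d)).div_const 2).mul
        (hderiv' t ht))).congr_deriv (by simp only [id, Pi.mul_apply]; ring))
    ((hf.sub hK).intervalIntegrable_of_Icc hcd)
  rw [intervalIntegral.integral_sub (hf.intervalIntegrable_of_Icc hcd)
    (hK.intervalIntegrable_of_Icc hcd)] at hFTC
  linear_combination hFTC

theorem integral_sub_mul_sub (c d : ℝ) : ∫ t in c..d, (t - c) * (d - t) = (d - c) ^ 3 / 6 := by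
  rw [integral_eq_sub_of_hasDerivAt (f := fun t => (t - c) ^ 2 * (d - t) / 2 + (t - c) ^ 3 / 6)
    (fun t _ => (((((hasDerivAt_id t).sub_const c).pow 2).mul
      ((hasDerivAt_id t).const_sub d)).div_const 2 |>.add
        ((((hasDerivAt_id t).sub_const c).pow 3).div_const 6)).congr_deriv
      (by simp only [id, Pi.pow_apply]; ring))
    (Continuous.intervalIntegrable (by fun_prop) _ _)]
  ring

theorem abs_integral_sub_trapezoid_le {f f' f'' : ℝ → ℝ} {c d M : ℝ} (hcd : c ≤ d)
    (hf : ContinuousOn f (Icc c d)) (hf' : ContinuousOn f' (Icc c d))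
    (hf'' : ContinuousOn f'' (Icc c d))
    (hderiv : ∀ t ∈ Ioo c d, HasDerivAt f (f' t) t)
    (hderiv' : ∀ t ∈ Ioo c d, HasDerivAt f' (f'' t) t)
    (hM : ∀ t ∈ Icc c d, |f'' t| ≤ M) :
    |(∫ t in c..d, f t) - (f c + f d) / 2 * (d - c)| ≤ M * (d - c) ^ 3 / 12 := by
  rw [integral_sub_trapezoid_eq_integral_mul_deriv2 hcd hf hf' hf'' hderiv hderiv']
  have hpointwise : ∀ t ∈ Ioc c d,
      ‖(t - c) * (t - d) / 2 * f'' t‖ ≤ M / 2 * ((t - c) * (d - t)) := by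
    intro t ht
    have hK : |(t - c) * (t - d) / 2| = (t - c) * (d - t) / 2 := by
      rw [abs_of_nonpos (by nlinarith [ht.1, ht.2])]; ring
    rw [Real.norm_eq_abs, abs_mul, hK]
    calc (t - c) * (d - t) / 2 * |f'' t| ≤ (t - c) * (d - t) / 2 * M :=
          mul_le_mul_of_nonneg_left (hM t (Ioc_subset_Icc_self ht))
            (by nlinarith [ht.1, ht.2])
      _ = M / 2 * ((t - c) * (d - t)) := by ring
  calc ‖∫ t in c..d, (t - c) * (t - d) / 2 * f'' t‖
      ≤ ∫ t in c..d, M / 2 * ((t - c) * (d - t)) :=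
        norm_integral_le_of_norm_le hcd (Filter.Eventually.of_forall hpointwise)
          (Continuous.intervalIntegrable (by fun_prop) _ _)
    _ = M * (d - c) ^ 3 / 12 := by
        rw [intervalIntegral.integral_const_mul, integral_sub_mul_sub]; ring

theorem abs_integral_sub_trapezoid_sum_le {f f' f'' : ℝ → ℝ} {a b M : ℝ} {x : ℕ → ℝ}
    {N : ℕ} (hx : Monotone x) (hx0 : x 0 = a) (hxN : x N = b)
    (hf : ContinuousOn f (Icc a b)) (hf' : ContinuousOn f' (Icc a b))
    (hf'' : ContinuousOn f'' (Icc a b))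
    (hderiv : ∀ t ∈ Ioo a b, HasDerivAt f (f' t) t)
    (hderiv' : ∀ t ∈ Ioo a b, HasDerivAt f' (f'' t) t)
    (hM : ∀ t ∈ Icc a b, |f'' t| ≤ M) :
    |(∫ t in a..b, f t) -
        ∑ i ∈ range N, (f (x i) + f (x (i + 1))) / 2 * (x (i + 1) - x i)| ≤
      ∑ i ∈ range N, M * (x (i + 1) - x i) ^ 3 / 12 := by
  subst hx0 hxN
  have hIcc : ∀ i < N, Icc (x i) (x (i + 1)) ⊆ Icc (x 0) (x N) := fun i hi =>
    Icc_subset_Icc (hx i.zero_le) (hx hi)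
  have hIoo : ∀ i < N, Ioo (x i) (x (i + 1)) ⊆ Ioo (x 0) (x N) := fun i hi =>
    Ioo_subset_Ioo (hx i.zero_le) (hx hi)
  rw [← sum_integral_adjacent_intervals fun i hi =>
    (hf.mono (hIcc i hi)).intervalIntegrable_of_Icc (hx i.le_succ), ← sum_sub_distrib]
  refine (abs_sum_le_sum_abs _ _).trans (sum_le_sum fun i hi => ?_)
  rw [Finset.mem_range] at hi
  exact abs_integral_sub_trapezoid_le (hx i.le_succ) (hf.mono (hIcc i hi))
    (hf'.mono (hIcc i hi)) (hf''.mono (hIcc i hi)) (fun t ht => hderiv t (hIoo i hi ht))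
    (fun t ht => hderiv' t (hIoo i hi ht)) (fun t ht => hM t (hIcc i hi ht))

theorem trapezoidal_composite_error_bound
    (a b M : ℝ) (hab : a < b) (N : ℕ) (hN : 0 < N) (f : ℝ → ℝ)
    (hf : ContDiffOn ℝ 2 f (Set.Icc a b))
    (hM : ∀ x ∈ Set.Icc a b, |iteratedDerivWithin 2 f (Set.Icc a b) x| ≤ M) :
    let Δx : ℝ := (b - a) / N
    let x : ℕ → ℝ := fun k => a + k * Δx
    let T : ℝ := ∑ k ∈ Finset.Icc 1 N, (f (x (k - 1)) + f (x k)) / 2 * Δx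
    |(∫ t in a..b, f t) - T| ≤ M * (b - a) ^ 3 / (12 * N ^ 2) := by
  intro Δx x T
  have hNpos : (0 : ℝ) < N := Nat.cast_pos.mpr hN
  have hΔx : 0 ≤ Δx := div_nonneg (sub_nonneg.mpr hab.le) hNpos.le
  have hx : Monotone x := fun i j hij => by simp only [x]; gcongr
  have hx0 : x 0 = a := by simp [x]
  have hxN : x N = b := by simp only [x, Δx]; field_simp; ring
  have hstep : ∀ i, x (i + 1) - x i = Δx := fun i => by simp only [x]; push_cast; ring
  have hT : T = ∑ i ∈ range N, (f (x i) + f (x (i + 1))) / 2 * (x (i + 1) - x i) := by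
    simp only [T]
    rw [← Finset.Ico_add_one_right_eq_Icc, sum_Ico_eq_sum_range]
    simp [hstep, Nat.add_comm]
  have hs : UniqueDiffOn ℝ (Icc a b) := uniqueDiffOn_Icc hab
  have hcomposite := abs_integral_sub_trapezoid_sum_le hx hx0 hxN hf.continuousOn
    (hf.continuousOn_iteratedDerivWithin (m := 1) (by norm_num) hs)
    (hf.continuousOn_iteratedDerivWithin le_rfl hs)
    (fun t ht => by
      simpa using hf.hasDerivAt_iteratedDerivWithin_Icc (m := 0) (by norm_num) ht)
    (fun t ht => hf.hasDerivAt_iteratedDerivWithin_Icc (m := 1) (by norm_num) ht) hM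
  rw [hT]
  refine hcomposite.trans_eq ?_
  simp only [hstep, sum_const, card_range, nsmul_eq_mul, Δx]
  field_simp
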